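/- arXiv:1708.08865 — 6 statements merged into one kernel-verified Lean document; each statement's English description precedes it below -/
import Mathlib

section
/- Let r = 0.8 and c = 1/(8^r - 6^r). If x, y, z are nonnegative reals with x ≥ 8.956·z and y ≥ 1.036·z, then x^r + y^r ≥ (x + y + z)^r. -/
/-!
The map `t ↦ t ^ r` is concave, so its increments `f (t + s) - f t` decrease in `t`.
Hence `(x + y + z) ^ r - x ^ r - y ^ r` only grows when `x` and `y` are lowered to
`8.956 z` and `1.036 z`, where it equals `z ^ r (10.992 ^ r - 8.956 ^ r - 1.036 ^ r) ≤ 0`.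
The last numerical inequality is checked on fifth powers.
-/

open Real

lemma ConcaveOn.add_le_add_of_add_eq {s : Set ℝ} {f : ℝ → ℝ} (hf : ConcaveOn ℝ s f)
    {x y u v : ℝ} (hx : x ∈ s) (hy : y ∈ s) (hxu : x ≤ u) (huy : u ≤ y) (hsum : u + v = x + y) :
    f x + f y ≤ f u + f v := by
  obtain rfl : v = x + y - u := by linarith
  rcases hxu.eq_or_lt with rfl | hxu'
  · simp only [add_sub_cancel_left]; rfl
  have hxy : 0 < y - x := by linarith
  obtain ⟨t, ht0, ht1, rfl⟩ : ∃ t, 0 ≤ t ∧ t ≤ 1 ∧ u = x + t * (y - x) :=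
    ⟨(u - x) / (y - x), div_nonneg (by linarith) hxy.le,
      (div_le_one hxy).2 (by linarith), by rw [div_mul_cancel₀ _ hxy.ne']; ring⟩
  have h₁ := hf.2 hx hy (sub_nonneg.2 ht1) ht0 (sub_add_cancel 1 t)
  have h₂ := hf.2 hx hy ht0 (sub_nonneg.2 ht1) (add_sub_cancel t 1)
  simp only [smul_eq_mul] at h₁ h₂
  rw [show (1 - t) * x + t * y = x + t * (y - x) by ring] at h₁
  rw [show t * x + (1 - t) * y = x + y - (x + t * (y - x)) by ring] at h₂
  linear_combination h₁ + h₂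

lemma ConcaveOn.map_add_add_le_of_le {f : ℝ → ℝ} (hf : ConcaveOn ℝ (Set.Ici 0) f)
    {a b c x y : ℝ} (ha : 0 ≤ a) (hb : 0 ≤ b) (hc : 0 ≤ c) (hax : a ≤ x) (hby : b ≤ y)
    (habc : f (a + b + c) ≤ f a + f b) :
    f (x + y + c) ≤ f x + f y := by
  have hy : f b + f (x + y + c) ≤ f (x + b + c) + f y :=
    hf.add_le_add_of_add_eq hb (by simp only [Set.mem_Ici]; linarith) (by linarith)
      (by linarith) (by ring)
  have hx : f a + f (x + b + c) ≤ f (a + b + c) + f x :=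
    hf.add_le_add_of_add_eq ha (by simp only [Set.mem_Ici]; linarith) (by linarith)
      (by linarith) (by ring)
  linarith

lemma Real.le_rpow_div_natCast_iff {x y : ℝ} (hx : 0 ≤ x) (hy : 0 ≤ y) (m : ℕ) {n : ℕ}
    (hn : n ≠ 0) : x ≤ y ^ ((m : ℝ) / n) ↔ x ^ n ≤ y ^ m := by
  rw [div_eq_mul_inv, rpow_natCast_mul hy, le_rpow_inv_iff_of_pos hx (by positivity)
    (by positivity), rpow_natCast]

lemma Real.rpow_div_natCast_le_iff {x y : ℝ} (hx : 0 ≤ x) (hy : 0 ≤ y) (m : ℕ) {n : ℕ}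
    (hn : n ≠ 0) : y ^ ((m : ℝ) / n) ≤ x ↔ y ^ m ≤ x ^ n := by
  rw [div_eq_mul_inv, rpow_natCast_mul hy, rpow_inv_le_iff_of_pos (by positivity) hx
    (by positivity), rpow_natCast]

lemma rpow_four_fifths_numerical_bound :
    (10.992 : ℝ) ^ (0.8 : ℝ) ≤ (8.956 : ℝ) ^ (0.8 : ℝ) + (1.036 : ℝ) ^ (0.8 : ℝ) := by
  have h : (0.8 : ℝ) = ((4 : ℕ) : ℝ) / (5 : ℕ) := by norm_num
  rw [h]
  have h₁ : (5.77685 : ℝ) ≤ (8.956 : ℝ) ^ ((4 : ℕ) / (5 : ℕ) : ℝ) :=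
    (le_rpow_div_natCast_iff (by norm_num) (by norm_num) 4 (by norm_num)).2 (by norm_num)
  have h₂ : (1.02869 : ℝ) ≤ (1.036 : ℝ) ^ ((4 : ℕ) / (5 : ℕ) : ℝ) :=
    (le_rpow_div_natCast_iff (by norm_num) (by norm_num) 4 (by norm_num)).2 (by norm_num)
  have h₃ : (10.992 : ℝ) ^ ((4 : ℕ) / (5 : ℕ) : ℝ) ≤ 6.80554 :=
    (rpow_div_natCast_le_iff (by norm_num) (by norm_num) 4 (by norm_num)).2 (by norm_num)
  linarith

theorem stmt_1_general (r : ℝ) (hr : r = 0.8) (x y z : ℝ)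
    (hz0 : 0 ≤ z)
    (hx : x ≥ 8.956 * z) (hy : y ≥ 1.036 * z) :
    x ^ r + y ^ r ≥ (x + y + z) ^ r := by
  subst hr
  refine (concaveOn_rpow (by norm_num) (by norm_num)).map_add_add_le_of_le (by positivity)
    (by positivity) hz0 hx hy ?_
  have hsum : 8.956 * z + 1.036 * z + z = 10.992 * z := by ring
  rw [hsum, mul_rpow (by norm_num) hz0, mul_rpow (by norm_num) hz0, mul_rpow (by norm_num) hz0,
    ← add_mul]
  exact mul_le_mul_of_nonneg_right rpow_four_fifths_numerical_bound (rpow_nonneg hz0 _)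

theorem stmt_1 (r : ℝ) (hr : r = 0.8) (x y z : ℝ)
    (hx0 : 0 ≤ x) (hy0 : 0 ≤ y) (hz0 : 0 ≤ z)
    (hx : x ≥ 8.956 * z) (hy : y ≥ 1.036 * z) :
    x ^ r + y ^ r ≥ (x + y + z) ^ r :=
  stmt_1_general r hr x y z hz0 hx hy
end

section
/- Let r = 0.8 and c = 1/(8^r - 6^r). If x, y are nonnegative reals with x ≤ 10.174·y, then c·x^r + y^r ≥ (x + y)^r. -/
open Real

/-- Submodularity of `x ↦ x ^ r` for `0 < r < 1`: increments are decreasing. -/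
lemma submod_rpow (r : ℝ) (hr0 : 0 < r) (hr1 : r < 1) (u v s : ℝ)
    (hu : 0 ≤ u) (huv : u ≤ v) (hs : 0 ≤ s) :
    (v + s) ^ r - v ^ r ≤ (u + s) ^ r - u ^ r := by
  have hconc := Real.concaveOn_rpow hr0.le hr1.le
  set w : ℝ := v - u with hw
  have hw0 : 0 ≤ w := by rw [hw]; linarith
  rcases eq_or_lt_of_le (by positivity : (0:ℝ) ≤ w + s) with h0 | hws
  · have hwz : w = 0 := by linarith
    have hsz : s = 0 := by linarith
    rw [hw] at hwz
    have hvu : v = u := by linarith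
    simp [hvu, hsz]
  · have hmemu : u ∈ Set.Ici (0:ℝ) := hu
    have hmemb : v + s ∈ Set.Ici (0:ℝ) := by
      simp only [Set.mem_Ici]; linarith
    have hvs : v + s = u + (w + s) := by rw [hw]; ring
    have hla : (0:ℝ) ≤ w / (w + s) := by positivity
    have hlb : (0:ℝ) ≤ s / (w + s) := by positivity
    have hlab : w / (w + s) + s / (w + s) = 1 := by field_simp
    have hlab2 : s / (w + s) + w / (w + s) = 1 := by field_simp; ring
    have h1 := hconc.2 hmemu hmemb hla hlb hlab
    have h2 := hconc.2 hmemu hmemb hlb hla hlab2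
    simp only [smul_eq_mul] at h1 h2
    have hcomb1 : w / (w + s) * u + s / (w + s) * (v + s) = u + s := by
      rw [hvs]; field_simp; ring
    have hcomb2 : s / (w + s) * u + w / (w + s) * (v + s) = v := by
      rw [hvs]; field_simp; ring
    rw [hcomb1] at h1
    rw [hcomb2] at h2
    have hsum : u ^ r + (v + s) ^ r ≤ (u + s) ^ r + v ^ r := by
      calc u ^ r + (v + s) ^ r
          = (w / (w + s) + s / (w + s)) * u ^ r
            + (s / (w + s) + w / (w + s)) * (v + s) ^ r := by
            rw [hlab, hlab2]; ring
        _ ≤ (u + s) ^ r + v ^ r := by linarith [h1, h2]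
    linarith

/-- `x ^ (0.8) ≤ q` from `x ^ 4 ≤ q ^ 5`. -/
lemma rpow08_le (x q : ℝ) (hx : 0 ≤ x) (hq : 0 ≤ q) (h : x ^ (4:ℕ) ≤ q ^ (5:ℕ)) :
    x ^ (0.8 : ℝ) ≤ q := by
  have key : (x ^ (0.8:ℝ)) ^ (5:ℕ) = x ^ (4:ℕ) := by
    rw [← Real.rpow_natCast (x ^ (0.8:ℝ)) 5, ← Real.rpow_mul hx, ← Real.rpow_natCast x 4]
    norm_num
  have h5 : (x ^ (0.8:ℝ)) ^ (5:ℕ) ≤ q ^ (5:ℕ) := by rw [key]; exact h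
  exact le_of_pow_le_pow_left₀ (by norm_num) hq h5

/-- `q ≤ x ^ (0.8)` from `q ^ 5 ≤ x ^ 4`. -/
lemma le_rpow08 (x q : ℝ) (hx : 0 ≤ x) (hq : 0 ≤ q) (h : q ^ (5:ℕ) ≤ x ^ (4:ℕ)) :
    q ≤ x ^ (0.8 : ℝ) := by
  have key : (x ^ (0.8:ℝ)) ^ (5:ℕ) = x ^ (4:ℕ) := by
    rw [← Real.rpow_natCast (x ^ (0.8:ℝ)) 5, ← Real.rpow_mul hx, ← Real.rpow_natCast x 4]
    norm_num
  have h5 : q ^ (5:ℕ) ≤ (x ^ (0.8:ℝ)) ^ (5:ℕ) := by rw [key]; exact h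
  exact le_of_pow_le_pow_left₀ (by norm_num) (Real.rpow_nonneg hx _) h5

theorem stmt_2 (r c : ℝ) (hr : r = 0.8)
    (hc : c = 1 / ((8 : ℝ) ^ r - (6 : ℝ) ^ r))
    (x y : ℝ) (hx0 : 0 ≤ x) (hy0 : 0 ≤ y) (hxy : x ≤ 10.174 * y) :
    c * x ^ r + y ^ r ≥ (x + y) ^ r := by
  subst hr hc
  have hA : (11.174:ℝ) ^ (0.8:ℝ) ≤ 43097/6250 :=
    rpow08_le _ _ (by norm_num) (by norm_num) (by norm_num)
  have hB : (8:ℝ) ^ (0.8:ℝ) ≤ 131951/25000 :=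
    rpow08_le _ _ (by norm_num) (by norm_num) (by norm_num)
  have hD : (13103/3125 : ℝ) ≤ (6:ℝ) ^ (0.8:ℝ) :=
    le_rpow08 _ _ (by norm_num) (by norm_num) (by norm_num)
  have hE : (25589/4000 : ℝ) ≤ (10.174:ℝ) ^ (0.8:ℝ) :=
    le_rpow08 _ _ (by norm_num) (by norm_num) (by norm_num)
  have hA1 : (1:ℝ) ≤ (11.174:ℝ) ^ (0.8:ℝ) :=
    le_rpow08 _ _ (by norm_num) (by norm_num) (by norm_num)
  have h86 : (6:ℝ) ^ (0.8:ℝ) < (8:ℝ) ^ (0.8:ℝ) :=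
    Real.rpow_lt_rpow (by norm_num) (by norm_num) (by norm_num)
  have hDpos : (0:ℝ) < (8:ℝ) ^ (0.8:ℝ) - (6:ℝ) ^ (0.8:ℝ) := by linarith
  rcases eq_or_lt_of_le hy0 with hy | hy
  · have hx : x = 0 := le_antisymm (by linarith [hxy]) hx0
    simp [hx, ← hy, Real.zero_rpow (by norm_num : (0.8:ℝ) ≠ 0)]
  rcases eq_or_lt_of_le hx0 with hx | hx
  · simp [← hx, Real.zero_rpow (by norm_num : (0.8:ℝ) ≠ 0)]
  -- main case: 0 < x, 0 < y
  have hTpos : (0:ℝ) < 10.174 := by norm_num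
  have huv : x / 10.174 ≤ y := by rw [div_le_iff₀ hTpos]; linarith [hxy]
  have hu0 : (0:ℝ) ≤ x / 10.174 := by positivity
  have key := submod_rpow 0.8 (by norm_num) (by norm_num) (x / 10.174) y x hu0 huv hx0
  have hxp : x / 10.174 + x = (x / 10.174) * 11.174 := by field_simp; ring
  have hmul : (x / 10.174 + x) ^ (0.8:ℝ)
      = (x / 10.174) ^ (0.8:ℝ) * (11.174:ℝ) ^ (0.8:ℝ) := by
    rw [hxp, Real.mul_rpow hu0 (by norm_num)]
  have hdiv : (x / 10.174) ^ (0.8:ℝ) = x ^ (0.8:ℝ) / (10.174:ℝ) ^ (0.8:ℝ) :=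
    Real.div_rpow hx0 hTpos.le _
  have hTr : (0:ℝ) < (10.174:ℝ) ^ (0.8:ℝ) := Real.rpow_pos_of_pos hTpos _
  have hxr : (0:ℝ) ≤ x ^ (0.8:ℝ) := Real.rpow_nonneg hx0 _
  -- numeric key inequality
  have hnum : ((11.174:ℝ) ^ (0.8:ℝ) - 1) * ((8:ℝ) ^ (0.8:ℝ) - (6:ℝ) ^ (0.8:ℝ))
      ≤ (10.174:ℝ) ^ (0.8:ℝ) := by
    nlinarith [hA, hB, hD, hE, hA1, hDpos]
  have hnum' : (11.174:ℝ) ^ (0.8:ℝ) - 1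
      ≤ (10.174:ℝ) ^ (0.8:ℝ) * (1 / ((8:ℝ) ^ (0.8:ℝ) - (6:ℝ) ^ (0.8:ℝ))) := by
    rw [mul_one_div, le_div_iff₀ hDpos]; exact hnum
  have hstep : (x ^ (0.8:ℝ) / (10.174:ℝ) ^ (0.8:ℝ)) * ((11.174:ℝ) ^ (0.8:ℝ) - 1)
      ≤ 1 / ((8:ℝ) ^ (0.8:ℝ) - (6:ℝ) ^ (0.8:ℝ)) * x ^ (0.8:ℝ) := by
    calc (x ^ (0.8:ℝ) / (10.174:ℝ) ^ (0.8:ℝ)) * ((11.174:ℝ) ^ (0.8:ℝ) - 1)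
        ≤ (x ^ (0.8:ℝ) / (10.174:ℝ) ^ (0.8:ℝ))
          * ((10.174:ℝ) ^ (0.8:ℝ) * (1 / ((8:ℝ) ^ (0.8:ℝ) - (6:ℝ) ^ (0.8:ℝ)))) :=
          mul_le_mul_of_nonneg_left hnum' (div_nonneg hxr hTr.le)
      _ = 1 / ((8:ℝ) ^ (0.8:ℝ) - (6:ℝ) ^ (0.8:ℝ)) * x ^ (0.8:ℝ) := by
          field_simp
  -- combine
  have hkey2 : (y + x) ^ (0.8:ℝ) - y ^ (0.8:ℝ)
      ≤ (x ^ (0.8:ℝ) / (10.174:ℝ) ^ (0.8:ℝ)) * ((11.174:ℝ) ^ (0.8:ℝ) - 1) := by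
    rw [hmul, hdiv] at key
    nlinarith [key]
  have hcomm : (x + y) ^ (0.8:ℝ) = (y + x) ^ (0.8:ℝ) := by rw [add_comm]
  rw [ge_iff_le, hcomm]
  linarith [hkey2, hstep]
end

section
/- Let r = 0.8. If x, y are nonnegative reals with 0.5·y ≤ x ≤ 8.884·y, then x^r + y^r ≥ (1 + 1/10.174)^r · (x + y)^r. -/
set_option maxHeartbeats 2000000 in
theorem key_poly (u v : ℝ) (ha : (0:ℝ) ≤ 100*u - 87*v) (hb : (0:ℝ) ≤ 1548*v - 1000*u) :
    5587^4 * (u^5+v^5)^4 ≤ 5087^4 * (u^4+v^4)^5 := by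
  have t0 : (0:ℝ) ≤ 852760567443575194861397289435009312605824667569483 * (100*u - 87*v)^0 * (1548*v - 1000*u)^20 :=
    mul_nonneg (mul_nonneg (by norm_num) (pow_nonneg ha 0)) (pow_nonneg hb 20)
  have t1 : (0:ℝ) ≤ 232403265949167562163201708429639065251912958462174640 * (100*u - 87*v)^1 * (1548*v - 1000*u)^19 :=
    mul_nonneg (mul_nonneg (by norm_num) (pow_nonneg ha 1)) (pow_nonneg hb 19)
  have t2 : (0:ℝ) ≤ 29992519789974208491163958645126584408123612118035244320 * (100*u - 87*v)^2 * (1548*v - 1000*u)^18 :=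
    mul_nonneg (mul_nonneg (by norm_num) (pow_nonneg ha 2)) (pow_nonneg hb 18)
  have t3 : (0:ℝ) ≤ 2442729617187286625303830251590960812603946907943441255680 * (100*u - 87*v)^3 * (1548*v - 1000*u)^17 :=
    mul_nonneg (mul_nonneg (by norm_num) (pow_nonneg ha 3)) (pow_nonneg hb 17)
  have t4 : (0:ℝ) ≤ 141021170032809729376849729399940101457774588081730204610560 * (100*u - 87*v)^4 * (1548*v - 1000*u)^16 :=
    mul_nonneg (mul_nonneg (by norm_num) (pow_nonneg ha 4)) (pow_nonneg hb 16)
  have t5 : (0:ℝ) ≤ 6139706266249651779588327459955800861996378076112163321274368 * (100*u - 87*v)^5 * (1548*v - 1000*u)^15 :=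
    mul_nonneg (mul_nonneg (by norm_num) (pow_nonneg ha 5)) (pow_nonneg hb 15)
  have t6 : (0:ℝ) ≤ 209255112896583260712978504102471886667176910221344431608135680 * (100*u - 87*v)^6 * (1548*v - 1000*u)^14 :=
    mul_nonneg (mul_nonneg (by norm_num) (pow_nonneg ha 6)) (pow_nonneg hb 14)
  have t7 : (0:ℝ) ≤ 5717167387349764070702180388896205550670069462277107849218621440 * (100*u - 87*v)^7 * (1548*v - 1000*u)^13 :=
    mul_nonneg (mul_nonneg (by norm_num) (pow_nonneg ha 7)) (pow_nonneg hb 13)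
  have t8 : (0:ℝ) ≤ 127130315967752425550679346098265666893159397106941249872724623360 * (100*u - 87*v)^8 * (1548*v - 1000*u)^12 :=
    mul_nonneg (mul_nonneg (by norm_num) (pow_nonneg ha 8)) (pow_nonneg hb 12)
  have t9 : (0:ℝ) ≤ 2321857185711617411810637603892057551897255324090361910242228305920 * (100*u - 87*v)^9 * (1548*v - 1000*u)^11 :=
    mul_nonneg (mul_nonneg (by norm_num) (pow_nonneg ha 9)) (pow_nonneg hb 11)
  have t10 : (0:ℝ) ≤ 34979973656193823318930879800052661544703736698649690856188173877248 * (100*u - 87*v)^10 * (1548*v - 1000*u)^10 :=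
    mul_nonneg (mul_nonneg (by norm_num) (pow_nonneg ha 10)) (pow_nonneg hb 10)
  have t11 : (0:ℝ) ≤ 434757254208497908115265597167968487444761574889887760885016659230720 * (100*u - 87*v)^11 * (1548*v - 1000*u)^9 :=
    mul_nonneg (mul_nonneg (by norm_num) (pow_nonneg ha 11)) (pow_nonneg hb 9)
  have t12 : (0:ℝ) ≤ 4439538630784409004756291895846944909103279160991211594536477429596160 * (100*u - 87*v)^12 * (1548*v - 1000*u)^8 :=
    mul_nonneg (mul_nonneg (by norm_num) (pow_nonneg ha 12)) (pow_nonneg hb 8)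
  have t13 : (0:ℝ) ≤ 36920146053475770091604356766684926951003856086573279384587674572554240 * (100*u - 87*v)^13 * (1548*v - 1000*u)^7 :=
    mul_nonneg (mul_nonneg (by norm_num) (pow_nonneg ha 13)) (pow_nonneg hb 7)
  have t14 : (0:ℝ) ≤ 246383507186404187494888993443276384414592752792147200546976043609620480 * (100*u - 87*v)^14 * (1548*v - 1000*u)^6 :=
    mul_nonneg (mul_nonneg (by norm_num) (pow_nonneg ha 14)) (pow_nonneg hb 6)
  have t15 : (0:ℝ) ≤ 1289233833654627901770103270985830472487747507559196787428695491339091968 * (100*u - 87*v)^15 * (1548*v - 1000*u)^5 :=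
    mul_nonneg (mul_nonneg (by norm_num) (pow_nonneg ha 15)) (pow_nonneg hb 5)
  have t16 : (0:ℝ) ≤ 5100609952038646378090739128276215718431370600124043742754628705410088960 * (100*u - 87*v)^16 * (1548*v - 1000*u)^4 :=
    mul_nonneg (mul_nonneg (by norm_num) (pow_nonneg ha 16)) (pow_nonneg hb 4)
  have t17 : (0:ℝ) ≤ 14363979128921281241731928407639192361686981710653453749571279002879918080 * (100*u - 87*v)^17 * (1548*v - 1000*u)^3 :=
    mul_nonneg (mul_nonneg (by norm_num) (pow_nonneg ha 17)) (pow_nonneg hb 3)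
  have t18 : (0:ℝ) ≤ 25720057769952935243465294259173646977387243931346223668696262191580446720 * (100*u - 87*v)^18 * (1548*v - 1000*u)^2 :=
    mul_nonneg (mul_nonneg (by norm_num) (pow_nonneg ha 18)) (pow_nonneg hb 2)
  have t19 : (0:ℝ) ≤ 22220913308919751430133561527404237077440646574078292073075488614032343040 * (100*u - 87*v)^19 * (1548*v - 1000*u)^1 :=
    mul_nonneg (mul_nonneg (by norm_num) (pow_nonneg ha 19)) (pow_nonneg hb 1)
  have t20 : (0:ℝ) ≤ 653191133756203217888664056526167987173406914986156987686047564649463808 * (100*u - 87*v)^20 * (1548*v - 1000*u)^0 :=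
    mul_nonneg (mul_nonneg (by norm_num) (pow_nonneg ha 20)) (pow_nonneg hb 0)
  have key : (234056858814332101016754116617248039235710956337569464320000000000000000000000000000000000000 : ℝ) * (5087^4 * (u^4+v^4)^5 - 5587^4 * (u^5+v^5)^4)
      = 852760567443575194861397289435009312605824667569483 * (100*u - 87*v)^0 * (1548*v - 1000*u)^20 + 232403265949167562163201708429639065251912958462174640 * (100*u - 87*v)^1 * (1548*v - 1000*u)^19 + 29992519789974208491163958645126584408123612118035244320 * (100*u - 87*v)^2 * (1548*v - 1000*u)^18 + 2442729617187286625303830251590960812603946907943441255680 * (100*u - 87*v)^3 * (1548*v - 1000*u)^17 + 141021170032809729376849729399940101457774588081730204610560 * (100*u - 87*v)^4 * (1548*v - 1000*u)^16 + 6139706266249651779588327459955800861996378076112163321274368 * (100*u - 87*v)^5 * (1548*v - 1000*u)^15 + 209255112896583260712978504102471886667176910221344431608135680 * (100*u - 87*v)^6 * (1548*v - 1000*u)^14 + 5717167387349764070702180388896205550670069462277107849218621440 * (100*u - 87*v)^7 * (1548*v - 1000*u)^13 + 127130315967752425550679346098265666893159397106941249872724623360 * (100*u - 87*v)^8 * (1548*v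 - 1000*u)^12 + 2321857185711617411810637603892057551897255324090361910242228305920 * (100*u - 87*v)^9 * (1548*v - 1000*u)^11 + 34979973656193823318930879800052661544703736698649690856188173877248 * (100*u - 87*v)^10 * (1548*v - 1000*u)^10 + 434757254208497908115265597167968487444761574889887760885016659230720 * (100*u - 87*v)^11 * (1548*v - 1000*u)^9 + 4439538630784409004756291895846944909103279160991211594536477429596160 * (100*u - 87*v)^12 * (1548*v - 1000*u)^8 + 36920146053475770091604356766684926951003856086573279384587674572554240 * (100*u - 87*v)^13 * (1548*v - 1000*u)^7 + 246383507186404187494888993443276384414592752792147200546976043609620480 * (100*u - 87*v)^14 * (1548*v - 1000*u)^6 + 1289233833654627901770103270985830472487747507559196787428695491339091968 * (100*u - 87*v)^15 * (1548*v - 1000*u)^5 + 5100609952038646378090739128276215718431370600124043742754628705410088960 * (100*u - 87*v)^16 * (1548*v - 1000*u)^4 + 14363979128921281241731928407639192361686981710653453749571279002879918080 * (100*u - 87*v)^17 * (1548*v - 1000*u)^3 + 25720057769952935243465294259173646977387243931346223668696262191580446720 * (100*u - 87*v)^18 * (1548*v - 1000*u)^2 + 22220913308919751430133561527404237077440646574078292073075488614032343040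 * (100*u - 87*v)^19 * (1548*v - 1000*u)^1 + 653191133756203217888664056526167987173406914986156987686047564649463808 * (100*u - 87*v)^20 * (1548*v - 1000*u)^0 := by ring
  linarith [key, t0, t1, t2, t3, t4, t5, t6, t7, t8, t9, t10, t11, t12, t13, t14, t15, t16, t17, t18, t19, t20]

theorem stmt_3 (r : ℝ) (hr : r = 0.8) (x y : ℝ)
    (hx0 : 0 ≤ x) (hy0 : 0 ≤ y)
    (h1 : 0.5 * y ≤ x) (h2 : x ≤ 8.884 * y) :
    x ^ r + y ^ r ≥ (1 + 1 / 10.174) ^ r * (x + y) ^ r := by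
  subst hr
  rcases eq_or_lt_of_le hy0 with hy | hy
  · have hx : x = 0 := le_antisymm (by rw [← hy] at h2; linarith) hx0
    subst hx
    rw [← hy]
    norm_num [Real.zero_rpow]
  set u : ℝ := x ^ ((1:ℝ)/5) with hu_def
  set v : ℝ := y ^ ((1:ℝ)/5) with hv_def
  have hu0 : 0 ≤ u := Real.rpow_nonneg hx0 _
  have hv0 : 0 ≤ v := Real.rpow_nonneg hy0 _
  have hu5 : u ^ (5:ℕ) = x := by
    rw [hu_def, ← Real.rpow_natCast (x ^ ((1:ℝ)/5)) 5, ← Real.rpow_mul hx0]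
    norm_num
  have hv5 : v ^ (5:ℕ) = y := by
    rw [hv_def, ← Real.rpow_natCast (y ^ ((1:ℝ)/5)) 5, ← Real.rpow_mul hy0]
    norm_num
  have hxr : x ^ (0.8:ℝ) = u ^ (4:ℕ) := by
    rw [hu_def, show (0.8:ℝ) = (1:ℝ)/5 * (4:ℕ) by norm_num, Real.rpow_mul hx0,
      Real.rpow_natCast]
  have hyr : y ^ (0.8:ℝ) = v ^ (4:ℕ) := by
    rw [hv_def, show (0.8:ℝ) = (1:ℝ)/5 * (4:ℕ) by norm_num, Real.rpow_mul hy0,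
      Real.rpow_natCast]
  have hc0 : (0:ℝ) ≤ 1 + 1 / 10.174 := by norm_num
  have hxy0 : (0:ℝ) ≤ x + y := by linarith
  rw [ge_iff_le, hxr, hyr]
  refine le_of_pow_le_pow_left₀ (n := 5) (by norm_num) (by positivity) ?_
  have e1 : ((1 + 1 / 10.174 : ℝ) ^ (0.8:ℝ) * (x + y) ^ (0.8:ℝ)) ^ (5:ℕ)
      = (1 + 1 / 10.174 : ℝ) ^ (4:ℕ) * (x + y) ^ (4:ℕ) := by
    rw [mul_pow, ← Real.rpow_natCast ((1 + 1 / 10.174 : ℝ) ^ (0.8:ℝ)) 5,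
      ← Real.rpow_mul hc0, ← Real.rpow_natCast ((x+y) ^ (0.8:ℝ)) 5,
      ← Real.rpow_mul hxy0, show (0.8:ℝ) * (5:ℕ) = ((4:ℕ):ℝ) by norm_num,
      Real.rpow_natCast, Real.rpow_natCast]
  rw [e1]
  have hxy : x + y = u ^ (5:ℕ) + v ^ (5:ℕ) := by rw [hu5, hv5]
  have ha : (0:ℝ) ≤ 100*u - 87*v := by
    by_contra hcon
    push_neg at hcon
    have h87 : u < 87/100 * v := by linarith
    have h5 : u ^ (5:ℕ) < (87/100 * v) ^ (5:ℕ) := by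
      apply pow_lt_pow_left₀ h87 hu0
      norm_num
    rw [mul_pow, hu5, hv5] at h5
    have : (0:ℝ) ≤ y := hy0
    nlinarith
  have hb : (0:ℝ) ≤ 1548*v - 1000*u := by
    by_contra hcon
    push_neg at hcon
    have h15 : 1548/1000 * v < u := by linarith
    have h5 : (1548/1000 * v) ^ (5:ℕ) < u ^ (5:ℕ) := by
      apply pow_lt_pow_left₀ h15 (by linarith) 
      norm_num
    rw [mul_pow, hu5, hv5] at h5
    nlinarith
  have hkey := key_poly u v ha hb
  rw [hxy]
  have hc4 : (1 + 1 / 10.174 : ℝ) ^ (4:ℕ) = 5587^4 / 5087^4 := by norm_num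
  rw [hc4, div_mul_eq_mul_div, div_le_iff₀ (by norm_num)]
  nlinarith [hkey]
end

section
/- Let r = 0.8 and c = 1/(8^r - 6^r). Let t, w, x, y, z be nonnegative reals with z < 1.98·(t + w + x + y) and 0 < t ≤ 2.072·min{w/1.036, x, y, z/5.884}. Then w^r + x^r + y^r + c·z^r ≥ (t + w + x + y + z)^r. -/
/-!
The inequality is homogeneous of degree `p = 4/5`, so we may take `t = 1`. Concavity of
`s ↦ s ^ p` makes the increments `(s + d) ^ p - s ^ p` decrease in `s`. Hence lowering `x` and `y`
to their least admissible value `125/259` and moving the excess into `w` only decreases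
`w ^ p + x ^ p + y ^ p`, after which everything depends on `σ = 1 + w + x + y` and `u = z` alone;
for the same reason the defect `w ^ p + x ^ p + y ^ p + c * z ^ p - (σ + u) ^ p` increases with `σ`,
so `σ = max (1277/518) (50/99 * u)` is the worst case. On the first branch the defect increases
with `u` as long as `c ≥ (u / (1277/518 + u)) ^ (1/5)`, which holds up to the switching point
`u = 99/50 * 1277/518`; on the second branch it increases because `(50/99) ^ p + c ≥ (149/99) ^ p`.
Everything reduces to one numerical inequality at `u = 1471/518`, true since `c ≈ 0.9216`.
-/

open Real Set

theorem ConcaveOn.map_add_sub_map_le {s : Set ℝ} {f : ℝ → ℝ} (hf : ConcaveOn ℝ s f)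
    {a b d : ℝ} (ha : a ∈ s) (hbd : b + d ∈ s) (hab : a ≤ b) (hd : 0 ≤ d) :
    f (b + d) - f b ≤ f (a + d) - f a := by
  rcases (add_nonneg (sub_nonneg.2 hab) hd).eq_or_lt with hlen | hlen
  · obtain rfl : a = b := by linarith
    obtain rfl : d = 0 := by linarith
    simp
  set μ := d / (b - a + d)
  have hμ0 : 0 ≤ μ := by positivity
  have hμ1 : μ ≤ 1 := div_le_one_of_le₀ (by linarith) hlen.le
  have hμd : μ * (b - a + d) = d := div_mul_cancel₀ _ hlen.ne'
  -- `a + d` and `b` are the two mirror-image convex combinations of `a` and `b + d`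
  have hleft := hf.2 ha hbd (sub_nonneg.2 hμ1) hμ0 (sub_add_cancel 1 μ)
  have hright := hf.2 ha hbd hμ0 (sub_nonneg.2 hμ1) (add_sub_cancel μ 1)
  simp only [smul_eq_mul] at hleft hright
  rw [show (1 - μ) * a + μ * (b + d) = a + d by linear_combination hμd] at hleft
  rw [show μ * a + (1 - μ) * (b + d) = b by linear_combination -hμd] at hright
  linarith

theorem Real.rpow_add_sub_rpow_le {p a b d : ℝ} (hp0 : 0 ≤ p) (hp1 : p ≤ 1) (ha : 0 ≤ a)
    (hab : a ≤ b) (hd : 0 ≤ d) : (b + d) ^ p - b ^ p ≤ (a + d) ^ p - a ^ p :=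
  (concaveOn_rpow hp0 hp1).map_add_sub_map_le ha (by simp only [mem_Ici]; linarith) hab hd

theorem Real.le_rpow_of_pow_le {x q p : ℝ} {n k : ℕ} (hx : 0 ≤ x) (hq : 0 ≤ q) (hn : n ≠ 0)
    (hp : n * p = k) (h : q ^ n ≤ x ^ k) : q ≤ x ^ p := by
  rwa [← pow_le_pow_iff_left₀ hq (by positivity) hn, ← rpow_natCast (x ^ p),
    ← rpow_mul hx, mul_comm, hp, rpow_natCast]

theorem Real.rpow_le_of_le_pow {x q p : ℝ} {n k : ℕ} (hx : 0 ≤ x) (hq : 0 ≤ q) (hn : n ≠ 0)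
    (hp : n * p = k) (h : x ^ k ≤ q ^ n) : x ^ p ≤ q := by
  rwa [← pow_le_pow_iff_left₀ (by positivity) hq hn, ← rpow_natCast (x ^ p),
    ← rpow_mul hx, mul_comm, hp, rpow_natCast]

theorem monotoneOn_mul_rpow_sub_rpow_add {p c K a b : ℝ} (hp0 : 0 ≤ p) (hp1 : p ≤ 1)
    (hK : 0 ≤ K) (ha : 0 < a) (hc : (b / (K + b)) ^ (1 - p) ≤ c) :
    MonotoneOn (fun u => c * u ^ p - (K + u) ^ p) (Icc a b) := by
  have hderiv : ∀ u, 0 < u → HasDerivAt (fun u => c * u ^ p - (K + u) ^ p)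
      (c * (p * u ^ (p - 1)) - p * (K + u) ^ (p - 1)) u := fun u hu =>
    ((hasDerivAt_rpow_const (Or.inl hu.ne')).const_mul c).sub <|
      ((hasDerivAt_id u).const_add K).rpow_const (Or.inl (by simp only [id]; positivity))
        |>.congr_deriv (by simp)
  refine monotoneOn_of_deriv_nonneg (convex_Icc a b) ?_ ?_ ?_
  · exact HasDerivAt.continuousOn fun u hu => hderiv u (ha.trans_le hu.1)
  · rw [interior_Icc]
    exact fun u hu => (hderiv u (ha.trans hu.1)).differentiableAt.differentiableWithinAt
  rw [interior_Icc]
  rintro u ⟨hau, hub⟩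
  have hu : 0 < u := ha.trans hau
  rw [(hderiv u hu).deriv]
  have hratio : (u / (K + u)) ^ (1 - p) ≤ c := by
    refine le_trans (rpow_le_rpow (div_nonneg hu.le (by positivity)) ?_ (by linarith)) hc
    rw [div_le_div_iff₀ (by positivity) (by linarith)]
    nlinarith
  have key : (K + u) ^ (p - 1) = (u / (K + u)) ^ (1 - p) * u ^ (p - 1) := by
    rw [div_rpow hu.le (by positivity), div_mul_eq_mul_div, ← rpow_add hu,
      show 1 - p + (p - 1) = 0 by ring, rpow_zero, one_div, ← rpow_neg (by positivity),
      neg_sub]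
  have : (K + u) ^ (p - 1) ≤ c * u ^ (p - 1) := by
    rw [key]; exact mul_le_mul_of_nonneg_right hratio (by positivity)
  nlinarith

theorem le_one_div_eight_rpow_sub_six_rpow :
    (9215 / 10000 : ℝ) ≤ 1 / ((8 : ℝ) ^ (4 / 5 : ℝ) - (6 : ℝ) ^ (4 / 5 : ℝ)) := by
  have h8 : (8 : ℝ) ^ (4 / 5 : ℝ) ≤ 527804 / 100000 :=
    rpow_le_of_le_pow (n := 5) (k := 4) (by norm_num) (by norm_num) (by norm_num) (by norm_num)
      (by norm_num)
  have h6 : (419295 / 100000 : ℝ) ≤ (6 : ℝ) ^ (4 / 5 : ℝ) :=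
    le_rpow_of_pow_le (n := 5) (k := 4) (by norm_num) (by norm_num) (by norm_num) (by norm_num)
      (by norm_num)
  have h68 : (6 : ℝ) ^ (4 / 5 : ℝ) < (8 : ℝ) ^ (4 / 5 : ℝ) :=
    rpow_lt_rpow (by norm_num) (by norm_num) (by norm_num)
  rw [le_div_iff₀ (sub_pos.2 h68)]
  linarith

theorem rpow_one_fifth_99_div_149_le :
    (99 / 149 : ℝ) ^ (1 / 5 : ℝ) ≤ 9215 / 10000 :=
  rpow_le_of_le_pow (n := 5) (k := 1) (by norm_num) (by norm_num) (by norm_num) (by norm_num)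
    (by norm_num)

theorem rpow_149_div_99_le :
    (149 / 99 : ℝ) ^ (4 / 5 : ℝ) ≤ (50 / 99 : ℝ) ^ (4 / 5 : ℝ) + 9215 / 10000 := by
  have h149 : (149 / 99 : ℝ) ^ (4 / 5 : ℝ) ≤ 1387 / 1000 :=
    rpow_le_of_le_pow (n := 5) (k := 4) (by norm_num) (by norm_num) (by norm_num) (by norm_num)
      (by norm_num)
  have h50 : (5789 / 10000 : ℝ) ≤ (50 / 99 : ℝ) ^ (4 / 5 : ℝ) :=
    le_rpow_of_pow_le (n := 5) (k := 4) (by norm_num) (by norm_num) (by norm_num) (by norm_num)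
      (by norm_num)
  linarith

theorem rpow_base_case_le :
    (1374 / 259 : ℝ) ^ (4 / 5 : ℝ) ≤ 2 * (125 / 259 : ℝ) ^ (4 / 5 : ℝ) + (1 / 2 : ℝ) ^ (4 / 5 : ℝ)
      + 9215 / 10000 * (1471 / 518 : ℝ) ^ (4 / 5 : ℝ) := by
  have hK : (1374 / 259 : ℝ) ^ (4 / 5 : ℝ) ≤ 38 / 10 :=
    rpow_le_of_le_pow (n := 5) (k := 4) (by norm_num) (by norm_num) (by norm_num) (by norm_num)
      (by norm_num)
  have hm : (5583 / 10000 : ℝ) ≤ (125 / 259 : ℝ) ^ (4 / 5 : ℝ) :=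
    le_rpow_of_pow_le (n := 5) (k := 4) (by norm_num) (by norm_num) (by norm_num) (by norm_num)
      (by norm_num)
  have hh : (5743 / 10000 : ℝ) ≤ (1 / 2 : ℝ) ^ (4 / 5 : ℝ) :=
    le_rpow_of_pow_le (n := 5) (k := 4) (by norm_num) (by norm_num) (by norm_num) (by norm_num)
      (by norm_num)
  have ha : (23047 / 10000 : ℝ) ≤ (1471 / 518 : ℝ) ^ (4 / 5 : ℝ) :=
    le_rpow_of_pow_le (n := 5) (k := 4) (by norm_num) (by norm_num) (by norm_num) (by norm_num)
      (by norm_num)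
  linarith

theorem reduced_ineq {c σ u : ℝ} (hc : 9215 / 10000 ≤ c) (hσ : 1277 / 518 ≤ σ)
    (hu : 1471 / 518 ≤ u) (huσ : u ≤ 99 / 50 * σ) :
    (σ + u) ^ (4 / 5 : ℝ) ≤
      2 * (125 / 259 : ℝ) ^ (4 / 5 : ℝ) + (σ - 509 / 259) ^ (4 / 5 : ℝ) + c * u ^ (4 / 5 : ℝ) := by
  have hp0 : (0 : ℝ) ≤ 4 / 5 := by norm_num
  have hp1 : (4 / 5 : ℝ) ≤ 1 := by norm_num
  -- `126423/25900 = 99/50 * 1277/518`, where `u ≤ 99/50 * σ` starts to bind at `σ = 1277/518`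
  have hmono := monotoneOn_mul_rpow_sub_rpow_add (c := c) (K := 1277 / 518) (a := 1471 / 518)
    (b := 126423 / 25900) hp0 hp1 (by norm_num) (by norm_num)
    (by norm_num; exact rpow_one_fifth_99_div_149_le.trans hc)
  have hsmall : ∀ v ∈ Icc (1471 / 518 : ℝ) (126423 / 25900), (1277 / 518 + v) ^ (4 / 5 : ℝ) ≤
      2 * (125 / 259 : ℝ) ^ (4 / 5 : ℝ) + (1 / 2 : ℝ) ^ (4 / 5 : ℝ) + c * v ^ (4 / 5 : ℝ) := by
    intro v hv
    have hleft := hmono ⟨le_rfl, by norm_num⟩ hv hv.1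
    have hbase := rpow_base_case_le
    have hc' := mul_le_mul_of_nonneg_right hc
      (rpow_nonneg (by norm_num : (0 : ℝ) ≤ 1471 / 518) (4 / 5))
    norm_num at hleft hbase ⊢
    linarith
  rcases le_total u (126423 / 25900) with hub | hbu
  · have hpush := rpow_add_sub_rpow_le (a := 1 / 2) (b := σ - 509 / 259) (d := u + 509 / 259)
      hp0 hp1 (by norm_num) (by linarith) (by linarith)
    rw [show σ - 509 / 259 + (u + 509 / 259) = σ + u by ring,
      show 1 / 2 + (u + 509 / 259) = 1277 / 518 + u by ring] at hpush
    linarith [hsmall u ⟨hu, hub⟩]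
  · -- with `σ` pushed down to `50/99 * u`, the defect is increasing in `u`
    have hpush := rpow_add_sub_rpow_le (a := 50 / 99 * u - 509 / 259) (b := σ - 509 / 259)
      (d := u + 509 / 259) hp0 hp1 (by linarith) (by linarith) (by linarith)
    have hshift := rpow_add_sub_rpow_le (a := 1 / 2) (b := 50 / 99 * u - 509 / 259)
      (d := 509 / 259) hp0 hp1 (by norm_num) (by linarith) (by norm_num)
    rw [show σ - 509 / 259 + (u + 509 / 259) = σ + u by ring,
      show 50 / 99 * u - 509 / 259 + (u + 509 / 259) = 149 / 99 * u by ring] at hpush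
    rw [show 50 / 99 * u - 509 / 259 + 509 / 259 = 50 / 99 * u by ring] at hshift
    have hu0 : 0 ≤ u := by linarith
    have hcoef : (149 / 99 : ℝ) ^ (4 / 5 : ℝ) - (50 / 99 : ℝ) ^ (4 / 5 : ℝ) - c ≤ 0 := by
      linarith [rpow_149_div_99_le]
    have hgrow := mul_le_mul_of_nonpos_left
      (rpow_le_rpow (by norm_num) hbu hp0) hcoef
    have hend := hsmall (126423 / 25900) ⟨by norm_num, le_rfl⟩
    rw [mul_rpow (by norm_num) hu0] at hpush hshift
    rw [show (1277 / 518 : ℝ) + 126423 / 25900 = 149 / 99 * (126423 / 25900) by norm_num,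
      mul_rpow (by norm_num) (by norm_num)] at hend
    rw [show (1 / 2 : ℝ) + 509 / 259 = 50 / 99 * (126423 / 25900) by norm_num,
      mul_rpow (by norm_num) (by norm_num)] at hshift
    linarith

theorem normalized_ineq {c w x y z : ℝ} (hc : 9215 / 10000 ≤ c) (hw : 1 / 2 ≤ w)
    (hx : 125 / 259 ≤ x) (hy : 125 / 259 ≤ y) (hz : 1471 / 518 ≤ z)
    (hzσ : z ≤ 99 / 50 * (1 + w + x + y)) :
    (1 + w + x + y + z) ^ (4 / 5 : ℝ) ≤
      w ^ (4 / 5 : ℝ) + x ^ (4 / 5 : ℝ) + y ^ (4 / 5 : ℝ) + c * z ^ (4 / 5 : ℝ) := by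
  have hp0 : (0 : ℝ) ≤ 4 / 5 := by norm_num
  have hp1 : (4 / 5 : ℝ) ≤ 1 := by norm_num
  have hpush_x := rpow_add_sub_rpow_le (a := 125 / 259) (b := w) (d := x - 125 / 259)
    hp0 hp1 (by norm_num) (by linarith) (by linarith)
  have hpush_y := rpow_add_sub_rpow_le (a := 125 / 259) (b := w + x - 125 / 259)
    (d := y - 125 / 259) hp0 hp1 (by norm_num) (by linarith) (by linarith)
  rw [add_sub_cancel, show w + (x - 125 / 259) = w + x - 125 / 259 by ring] at hpush_x
  rw [add_sub_cancel] at hpush_y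
  have hred := reduced_ineq (σ := 1 + w + x + y) hc (by linarith) hz hzσ
  rw [show 1 + w + x + y - 509 / 259 = w + x - 125 / 259 + (y - 125 / 259) by ring] at hred
  linarith

theorem stmt_4_general (r c : ℝ) (hr : r = 0.8)
    (hc : c = 1 / ((8 : ℝ) ^ r - (6 : ℝ) ^ r))
    (t w x y z : ℝ)
    (hz : z < 1.98 * (t + w + x + y))
    (ht0 : 0 < t)
    (ht : t ≤ 2.072 * min (w / 1.036) (min x (min y (z / 5.884)))) :
    w ^ r + x ^ r + y ^ r + c * z ^ r ≥ (t + w + x + y + z) ^ r := by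
  obtain rfl : r = 4 / 5 := by rw [hr]; norm_num
  have hc' : 9215 / 10000 ≤ c := hc ▸ le_one_div_eight_rpow_sub_six_rpow
  rw [← div_le_iff₀' (by norm_num), le_min_iff, le_min_iff, le_min_iff] at ht
  norm_num at ht hz
  obtain ⟨htw, htx, hty, htz⟩ := ht
  have key := normalized_ineq (w := w / t) (x := x / t) (y := y / t) (z := z / t) hc'
    (by rw [le_div_iff₀ ht0]; linarith) (by rw [le_div_iff₀ ht0]; linarith)
    (by rw [le_div_iff₀ ht0]; linarith) (by rw [le_div_iff₀ ht0]; linarith)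
    (by rw [div_le_iff₀ ht0]; field_simp; linarith)
  have hscale : ∀ s, 0 ≤ s → s ^ (4 / 5 : ℝ) = t ^ (4 / 5 : ℝ) * (s / t) ^ (4 / 5 : ℝ) :=
    fun s hs => by rw [← mul_rpow ht0.le (div_nonneg hs ht0.le), mul_div_cancel₀ s ht0.ne']
  rw [hscale w (by linarith), hscale x (by linarith), hscale y (by linarith),
    hscale z (by linarith), hscale (t + w + x + y + z) (by linarith),
    show (t + w + x + y + z) / t = 1 + w / t + x / t + y / t + z / t by field_simp]
  have := mul_le_mul_of_nonneg_left key (rpow_nonneg ht0.le (4 / 5))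
  linarith

theorem stmt_4 (r c : ℝ) (hr : r = 0.8)
    (hc : c = 1 / ((8 : ℝ) ^ r - (6 : ℝ) ^ r))
    (t w x y z : ℝ)
    (hw0 : 0 ≤ w) (hx0 : 0 ≤ x) (hy0 : 0 ≤ y) (hz0 : 0 ≤ z)
    (hz : z < 1.98 * (t + w + x + y))
    (ht0 : 0 < t)
    (ht : t ≤ 2.072 * min (w / 1.036) (min x (min y (z / 5.884)))) :
    w ^ r + x ^ r + y ^ r + c * z ^ r ≥ (t + w + x + y + z) ^ r :=
  stmt_4_general r c hr hc t w x y z hz ht0 ht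
end

section
/- Let r = 0.8 and c = 1/(8^r - 6^r). If w, x, y, z are nonnegative reals with w ≤ min{x, y, z}, then c·x^r + y^r + z^r ≥ c·(w + x + y + z)^r. -/
/-!
Concavity of `t ↦ t ^ r` makes its increments decrease with the base point, so moving the
excess `x - w`, `y - w`, `z - w` one at a time off the sum gives
`(w + x + y + z) ^ r + 3 w ^ r ≤ (4 w) ^ r + x ^ r + y ^ r + z ^ r`.
After multiplying by `c`, the leftover `c (4 ^ r - 3) w ^ r` is absorbed by
`(1 - c) (y ^ r + z ^ r) ≥ 2 (1 - c) w ^ r`, which needs only `c (4 ^ r - 1) ≤ 2`;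
for `r = 4/5` this is the numerical inequality `4 ^ r - 1 ≤ 2 (8 ^ r - 6 ^ r)`.
-/

theorem ConcaveOn.map_add_sub_map_le_of_le {S : Set ℝ} {f : ℝ → ℝ} (hf : ConcaveOn ℝ S f)
    {a b d : ℝ} (hb : b ∈ S) (had : a + d ∈ S) (hba : b ≤ a) (hd : 0 ≤ d) :
    f (a + d) - f a ≤ f (b + d) - f b := by
  rcases (show b ≤ a + d by linarith).eq_or_lt with hbad | hbad
  · obtain rfl : a = b := by linarith
    obtain rfl : d = 0 := by linarith
    simp
  · -- `a` and `b + d` are the convex combinations of `b` and `a + d` with weights `t`, `1 - t`.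
    set t := d / (a + d - b)
    have hlen : t * (a + d - b) = d := div_mul_cancel₀ d (by linarith)
    have ht0 : 0 ≤ t := div_nonneg hd (by linarith)
    have ht1 : t ≤ 1 := (div_le_one (by linarith)).2 (by linarith)
    have h₁ := hf.2 hb had (sub_nonneg.2 ht1) ht0 (by ring)
    have h₂ := hf.2 hb had ht0 (sub_nonneg.2 ht1) (by ring)
    have e₁ : (1 - t) • b + t • (a + d) = b + d := by
      simp only [smul_eq_mul]; linear_combination hlen
    have e₂ : t • b + (1 - t) • (a + d) = a := by
      simp only [smul_eq_mul]; linear_combination -hlen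
    rw [e₁] at h₁
    rw [e₂] at h₂
    simp only [smul_eq_mul] at h₁ h₂
    linarith

theorem ConcaveOn.map_add_add_add_le_of_le_of_le_of_le {f : ℝ → ℝ}
    (hf : ConcaveOn ℝ (Set.Ici 0) f) {w x y z : ℝ} (hw : 0 ≤ w) (hx : w ≤ x) (hy : w ≤ y)
    (hz : w ≤ z) :
    f (w + x + y + z) + 3 * f w ≤ f (4 * w) + f x + f y + f z := by
  have step : ∀ {a v s : ℝ}, s + w = a + v → w ≤ a → w ≤ v → f s + f w ≤ f a + f v := by
    intro a v s hs ha hv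
    obtain rfl : s = a + (v - w) := by linarith
    have := hf.map_add_sub_map_le_of_le (Set.mem_Ici.2 hw) (Set.mem_Ici.2 (by linarith)) ha
      (sub_nonneg.2 hv)
    rw [add_sub_cancel] at this
    linarith
  have h₁ := step (s := w + x + y + z) (a := 2 * w + y + z) (by ring) (by linarith) hx
  have h₂ := step (s := 2 * w + y + z) (a := 3 * w + z) (by ring) (by linarith) hy
  have h₃ := step (s := 3 * w + z) (a := 4 * w) (by ring) (by linarith) hz
  linarith

theorem mul_rpow_add_add_add_le {r c w x y z : ℝ} (hr₀ : 0 ≤ r) (hr₁ : r ≤ 1) (hc₀ : 0 ≤ c)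
    (hc₁ : c ≤ 1) (hc : c * (4 ^ r - 1) ≤ 2) (hw₀ : 0 ≤ w) (hw : w ≤ min x (min y z)) :
    c * (w + x + y + z) ^ r ≤ c * x ^ r + y ^ r + z ^ r := by
  obtain ⟨hx, hy, hz⟩ : w ≤ x ∧ w ≤ y ∧ w ≤ z := by simpa only [le_min_iff] using hw
  have hsum := (Real.concaveOn_rpow hr₀ hr₁).map_add_add_add_le_of_le_of_le_of_le hw₀ hx hy hz
  rw [Real.mul_rpow (by norm_num) hw₀] at hsum
  have hwy : w ^ r ≤ y ^ r := Real.rpow_le_rpow hw₀ hy hr₀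
  have hwz : w ^ r ≤ z ^ r := Real.rpow_le_rpow hw₀ hz hr₀
  have hwr : 0 ≤ w ^ r := Real.rpow_nonneg hw₀ r
  linarith [mul_le_mul_of_nonneg_left hsum hc₀, mul_le_mul_of_nonneg_right hc hwr,
    mul_le_mul_of_nonneg_left (add_le_add hwy hwz) (sub_nonneg.2 hc₁)]

theorem rpow_four_fifths_pow_five {a : ℝ} (ha : 0 ≤ a) : (a ^ (0.8 : ℝ)) ^ 5 = a ^ 4 := by
  rw [← Real.rpow_natCast, ← Real.rpow_mul ha, ← Real.rpow_natCast a 4]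
  norm_num

theorem rpow_four_fifths_le {a q : ℝ} (ha : 0 ≤ a) (hq : 0 ≤ q) (h : a ^ 4 ≤ q ^ 5) :
    a ^ (0.8 : ℝ) ≤ q :=
  le_of_pow_le_pow_left₀ (by norm_num) hq ((rpow_four_fifths_pow_five ha).trans_le h)

theorem le_rpow_four_fifths {a q : ℝ} (ha : 0 ≤ a) (h : q ^ 5 ≤ a ^ 4) :
    q ≤ a ^ (0.8 : ℝ) :=
  le_of_pow_le_pow_left₀ (by norm_num) (Real.rpow_nonneg ha _)
    (h.trans_eq (rpow_four_fifths_pow_five ha).symm)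

theorem stmt_5_general (r c : ℝ) (hr : r = 0.8)
    (hc : c = 1 / ((8 : ℝ) ^ r - (6 : ℝ) ^ r))
    (w x y z : ℝ)
    (hw0 : 0 ≤ w)
    (hw : w ≤ min x (min y z)) :
    c * x ^ r + y ^ r + z ^ r ≥ c * (w + x + y + z) ^ r := by
  subst hr
  have h₈ : (5.27 : ℝ) ≤ (8 : ℝ) ^ (0.8 : ℝ) := le_rpow_four_fifths (by norm_num) (by norm_num)
  have h₆ : (6 : ℝ) ^ (0.8 : ℝ) ≤ 4.2 :=
    rpow_four_fifths_le (by norm_num) (by norm_num) (by norm_num)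
  have h₄ : (4 : ℝ) ^ (0.8 : ℝ) ≤ 3.04 :=
    rpow_four_fifths_le (by norm_num) (by norm_num) (by norm_num)
  have hD : 1 ≤ (8 : ℝ) ^ (0.8 : ℝ) - (6 : ℝ) ^ (0.8 : ℝ) := by linarith
  have hc₀ : 0 ≤ c := hc ▸ one_div_nonneg.2 (by linarith)
  have hc₁ : c ≤ 1 := hc ▸ (div_le_one₀ (by linarith)).2 hD
  refine mul_rpow_add_add_add_le (by norm_num) (by norm_num) hc₀ hc₁ ?_ hw0 hw
  rw [hc, one_div, inv_mul_le_iff₀ (by linarith)]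
  linarith

theorem stmt_5 (r c : ℝ) (hr : r = 0.8)
    (hc : c = 1 / ((8 : ℝ) ^ r - (6 : ℝ) ^ r))
    (w x y z : ℝ)
    (hw0 : 0 ≤ w) (hx0 : 0 ≤ x) (hy0 : 0 ≤ y) (hz0 : 0 ≤ z)
    (hw : w ≤ min x (min y z)) :
    c * x ^ r + y ^ r + z ^ r ≥ c * (w + x + y + z) ^ r :=
  stmt_5_general r c hr hc w x y z hw0 hw
end

section
/- Let r = 0.8 and c = 1/(8^r - 6^r). If x, y, z are nonnegative reals with x ≥ 6·z and y ≥ z, then c·x^r + y^r ≥ c·(x + y + z)^r. -/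
/-!
Since `u ↦ u ^ r` is concave on `[0, ∞)`, its increments over an interval of fixed length
decrease as the interval moves right. Comparing the increment at `x` with the one at `6z`, and
the one at `y` with the one at `z`, gives
`(x + y + z) ^ r + z ^ r ≤ x ^ r + y ^ r + (8 ^ r - 6 ^ r) z ^ r`. Multiplying by `c` leaves
`(1 - c) z ^ r` on the right, and `c ≤ 1` (because `8 ^ 0.8 - 6 ^ 0.8 ≥ 1`) together with
`z ≤ y` absorbs it into `(1 - c) y ^ r`.
-/

open Real Set

theorem ConcaveOn.sub_le_sub_of_le {𝕜 : Type*} [Field 𝕜] [LinearOrder 𝕜] [IsStrictOrderedRing 𝕜]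
    {s : Set 𝕜} {f : 𝕜 → 𝕜} (hf : ConcaveOn 𝕜 s f) {a b d : 𝕜} (ha : a ∈ s) (hbd : b + d ∈ s)
    (hab : a ≤ b) (hd : 0 ≤ d) : f (b + d) - f b ≤ f (a + d) - f a := by
  rcases (add_nonneg (sub_nonneg.2 hab) hd).eq_or_lt with h | hpos
  · obtain ⟨rfl, rfl⟩ : b = a ∧ d = 0 := by constructor <;> linarith
    simp
  -- `a + d` and `b` are convex combinations of `a` and `b + d` with swapped weights.
  set μ := (b - a) / (b - a + d)
  set ν := d / (b - a + d)
  have hμ : 0 ≤ μ := div_nonneg (sub_nonneg.2 hab) hpos.le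
  have hν : 0 ≤ ν := div_nonneg hd hpos.le
  have hsum : μ + ν = 1 := by simp only [μ, ν]; field_simp
  have hb : μ • a + ν • (b + d) = a + d := by simp only [μ, ν, smul_eq_mul]; field_simp; ring
  have hb' : ν • a + μ • (b + d) = b := by simp only [μ, ν, smul_eq_mul]; field_simp; ring
  have h₁ := hf.2 ha hbd hμ hν hsum
  have h₂ := hf.2 ha hbd hν hμ (by rw [add_comm, hsum])
  rw [hb] at h₁
  rw [hb'] at h₂
  simp only [smul_eq_mul] at h₁ h₂
  linear_combination h₁ + h₂ - (f a + f (b + d)) * hsum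

theorem Real.add_add_rpow_add_rpow_le {p a x y z : ℝ} (hp₀ : 0 ≤ p) (hp₁ : p ≤ 1) (ha : 0 ≤ a)
    (hz : 0 ≤ z) (hx : a * z ≤ x) (hy : z ≤ y) :
    (x + y + z) ^ p + z ^ p ≤ x ^ p + y ^ p + ((a + 2) ^ p - a ^ p) * z ^ p := by
  have hf := Real.concaveOn_rpow hp₀ hp₁
  have haz : 0 ≤ a * z := by positivity
  have h₁ := hf.sub_le_sub_of_le (d := y + z) haz (by simp only [mem_Ici]; linarith) hx
    (by linarith)
  have h₂ := hf.sub_le_sub_of_le (d := (a + 1) * z) hz (by simp only [mem_Ici]; nlinarith) hy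
    (by positivity)
  rw [show a * z + (y + z) = y + (a + 1) * z by ring, mul_rpow ha hz] at h₁
  rw [show z + (a + 1) * z = (a + 2) * z by ring, mul_rpow (by linarith) hz] at h₂
  rw [← add_assoc] at h₁
  linarith

theorem Real.mul_add_add_rpow_le {p a c x y z : ℝ} (hp₀ : 0 ≤ p) (hp₁ : p ≤ 1) (ha : 0 ≤ a)
    (hD : 1 ≤ (a + 2) ^ p - a ^ p) (hc : c = 1 / ((a + 2) ^ p - a ^ p))
    (hz : 0 ≤ z) (hx : a * z ≤ x) (hy : z ≤ y) :
    c * (x + y + z) ^ p ≤ c * x ^ p + y ^ p := by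
  set D := (a + 2) ^ p - a ^ p
  have hc₀ : 0 ≤ c := by rw [hc]; positivity
  have hc₁ : c ≤ 1 := by rw [hc, div_le_one (by linarith)]; exact hD
  have hcD : c * D = 1 := by rw [hc]; field_simp
  have hzy : z ^ p ≤ y ^ p := rpow_le_rpow hz hy hp₀
  calc c * (x + y + z) ^ p
      ≤ c * (x ^ p + y ^ p + D * z ^ p - z ^ p) := by
        gcongr; linarith [Real.add_add_rpow_add_rpow_le hp₀ hp₁ ha hz hx hy]
    _ = c * x ^ p + c * y ^ p + (1 - c) * z ^ p := by linear_combination z ^ p * hcD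
    _ ≤ c * x ^ p + c * y ^ p + (1 - c) * y ^ p := by gcongr
    _ = c * x ^ p + y ^ p := by ring

theorem Real.one_add_six_rpow_le_eight_rpow : 1 + (6 : ℝ) ^ (0.8 : ℝ) ≤ (8 : ℝ) ^ (0.8 : ℝ) := by
  have pow_five (w : ℝ) (hw : 0 ≤ w) : (w ^ (0.8 : ℝ)) ^ 5 = w ^ 4 := by
    rw [← rpow_natCast, ← rpow_mul hw]; norm_num
  have h₆ : (6 : ℝ) ^ (0.8 : ℝ) ≤ 4.2 :=
    le_of_pow_le_pow_left₀ (n := 5) (by norm_num) (by norm_num)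
      (by rw [pow_five 6 (by norm_num)]; norm_num)
  refine le_of_pow_le_pow_left₀ (n := 5) (by norm_num) (by positivity) ?_
  calc (1 + (6 : ℝ) ^ (0.8 : ℝ)) ^ 5 ≤ 5.2 ^ 5 := by gcongr; linarith
    _ ≤ (8 ^ (0.8 : ℝ)) ^ 5 := by rw [pow_five 8 (by norm_num)]; norm_num

theorem stmt_6_general (r c : ℝ) (hr : r = 0.8)
    (hc : c = 1 / ((8 : ℝ) ^ r - (6 : ℝ) ^ r))
    (x y z : ℝ) (hz0 : 0 ≤ z)
    (hx : x ≥ 6 * z) (hy : y ≥ z) :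
    c * x ^ r + y ^ r ≥ c * (x + y + z) ^ r := by
  subst hr
  rw [show (8 : ℝ) = 6 + 2 by norm_num] at hc
  refine Real.mul_add_add_rpow_le (by norm_num) (by norm_num) (by norm_num) ?_ hc hz0 hx hy
  linarith [Real.one_add_six_rpow_le_eight_rpow]

theorem stmt_6 (r c : ℝ) (hr : r = 0.8)
    (hc : c = 1 / ((8 : ℝ) ^ r - (6 : ℝ) ^ r))
    (x y z : ℝ) (hx0 : 0 ≤ x) (hy0 : 0 ≤ y) (hz0 : 0 ≤ z)
    (hx : x ≥ 6 * z) (hy : y ≥ z) :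
    c * x ^ r + y ^ r ≥ c * (x + y + z) ^ r :=
  stmt_6_general r c hr hc x y z hz0 hx hy
end
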